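/- Let x_1, …, x_n ∈ ℝ^d be unit vectors, let b : ℕ → ℝ satisfy b_k ≥ 0 for all k and Σ_{k=0}^∞ b_k < ∞, and suppose the n×n matrix H with entries H_{ab} = Σ_{k=0}^∞ b_k (x_a · x_b)^k is positive definite. Fix p ≥ 1 with b_p > 0, and vectors β_1, …, β_p ∈ ℝ^d. Define y ∈ ℝⁿ by y_a = Π_{i=1}^p (β_i · x_a). Then yᵀ H⁻¹ y ≤ b_p⁻¹ Π_{i=1}^p ‖β_i‖². In particular, if b_p ≥ p⁻², then √(yᵀ H⁻¹ y) ≤ p Π_{i=1}^p ‖β_i‖. -/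

import Mathlib

open Matrix
open scoped RealInnerProductSpace

/-!
Put `z = H⁻¹ y`, so that `yᵀ H⁻¹ y = zᵀ H z`. Since `(x_a · x_c)^k = ⟪x_a^{⊗k}, x_c^{⊗k}⟫`, the
quadratic form of `H` dominates `b_p ‖Φᵀ z‖²`, where `Φ` is the matrix with rows `x_a^{⊗p}`;
moreover `y = Φ w` for `w = β₁ ⊗ ⋯ ⊗ β_p`, and `‖w‖² = ∏ ‖βᵢ‖²`. With `v = Φᵀ z` this reads
`b_p ‖v‖² ≤ ⟪v, w⟫ = yᵀ H⁻¹ y`, and expanding `‖w - b_p v‖² ≥ 0` gives `b_p ⟪v, w⟫ ≤ ‖w‖²`.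
-/

/-- The coordinates of `u₁ ⊗ ⋯ ⊗ u_k` in the standard basis of the tensor power. -/
def tensorCoords {κ ι : Type*} [Fintype κ] (u : κ → EuclideanSpace ℝ ι) (f : κ → ι) : ℝ :=
  ∏ i, u i (f i)

section TensorCoords

variable {κ ι : Type*} [Fintype κ] [DecidableEq κ] [Fintype ι]

theorem prod_inner_eq_dotProduct_tensorCoords (u v : κ → EuclideanSpace ℝ ι) :
    ∏ i, ⟪u i, v i⟫ = tensorCoords u ⬝ᵥ tensorCoords v := by
  simp only [PiLp.inner_apply, RCLike.inner_apply, conj_trivial, Fintype.prod_sum, dotProduct,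
    tensorCoords, ← Finset.prod_mul_distrib, mul_comm]

theorem tensorCoords_dotProduct_self (u : κ → EuclideanSpace ℝ ι) :
    tensorCoords u ⬝ᵥ tensorCoords u = ∏ i, ‖u i‖ ^ 2 := by
  simp only [← prod_inner_eq_dotProduct_tensorCoords, real_inner_self_eq_norm_sq]

end TensorCoords

def monomialFeatures {m ι : Type*} (x : m → EuclideanSpace ℝ ι) (k : ℕ) :
    Matrix m (Fin k → ι) ℝ :=
  Matrix.of fun a => tensorCoords fun _ : Fin k => x a

section MonomialFeatures

variable {m ι : Type*} [Fintype ι] (x : m → EuclideanSpace ℝ ι)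

theorem monomialFeatures_mul_transpose_apply (k : ℕ) (a c : m) :
    (monomialFeatures x k * (monomialFeatures x k)ᵀ) a c = ⟪x a, x c⟫ ^ k := by
  rw [mul_apply', ← Fin.prod_const, prod_inner_eq_dotProduct_tensorCoords]
  rfl

theorem monomialFeatures_mulVec_tensorCoords {p : ℕ} (β : Fin p → EuclideanSpace ℝ ι) (a : m) :
    (monomialFeatures x p *ᵥ tensorCoords β) a = ∏ i, ⟪β i, x a⟫ := by
  rw [prod_inner_eq_dotProduct_tensorCoords, dotProduct_comm]
  rfl

end MonomialFeatures

section QuadraticForm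

variable {m : Type*} [Fintype m]

theorem dotProduct_mul_transpose_mulVec {κ : Type*} [Fintype κ] (Φ : Matrix m κ ℝ)
    (z : m → ℝ) : z ⬝ᵥ ((Φ * Φᵀ) *ᵥ z) = (z ᵥ* Φ) ⬝ᵥ (z ᵥ* Φ) := by
  rw [← mulVec_mulVec, dotProduct_mulVec, mulVec_transpose]

theorem dotProduct_mulVec_le_of_eq_tsum {G : ℕ → Matrix m m ℝ} {H : Matrix m m ℝ}
    (hH : ∀ a c, H a c = ∑' k, G k a c) (hG : ∀ a c, Summable fun k => G k a c)
    (z : m → ℝ) (hz : ∀ k, 0 ≤ z ⬝ᵥ (G k *ᵥ z)) (p : ℕ) :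
    z ⬝ᵥ (G p *ᵥ z) ≤ z ⬝ᵥ (H *ᵥ z) := by
  have hrow : ∀ a, HasSum (fun k => (G k *ᵥ z) a) ((H *ᵥ z) a) := fun a => by
    simp only [mulVec, dotProduct, hH]
    exact hasSum_sum fun c _ => (hG a c).hasSum.mul_right (z c)
  exact le_hasSum (hasSum_sum fun a _ => (hrow a).mul_left (z a)) p fun k _ => hz k

theorem dotProduct_inv_mulVec_le {κ : Type*} [DecidableEq m] [Fintype κ]
    {H : Matrix m m ℝ} (hH : IsUnit H.det) (Φ : Matrix m κ ℝ) {c : ℝ} (hc : 0 < c)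
    (hle : ∀ z, c * (z ⬝ᵥ ((Φ * Φᵀ) *ᵥ z)) ≤ z ⬝ᵥ (H *ᵥ z)) (w : κ → ℝ) :
    (Φ *ᵥ w) ⬝ᵥ (H⁻¹ *ᵥ (Φ *ᵥ w)) ≤ c⁻¹ * (w ⬝ᵥ w) := by
  set z := H⁻¹ *ᵥ (Φ *ᵥ w)
  set v := z ᵥ* Φ
  have hHz : H *ᵥ z = Φ *ᵥ w := by
    rw [mulVec_mulVec, mul_nonsing_inv _ hH, one_mulVec]
  have hq : (Φ *ᵥ w) ⬝ᵥ z = v ⬝ᵥ w := by rw [dotProduct_comm, dotProduct_mulVec]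
  have hlower : c * (v ⬝ᵥ v) ≤ v ⬝ᵥ w := by
    have := hle z
    rwa [dotProduct_mul_transpose_mulVec, hHz, dotProduct_mulVec] at this
  have hsq : 0 ≤ (w - c • v) ⬝ᵥ (w - c • v) := Fintype.sum_nonneg fun i => mul_self_nonneg _
  simp only [sub_dotProduct, dotProduct_sub, smul_dotProduct, dotProduct_smul, smul_eq_mul,
    dotProduct_comm w v] at hsq
  rw [hq, le_inv_mul_iff₀ hc]
  nlinarith

end QuadraticForm

theorem mul_dotProduct_monomialFeatures_le {m ι : Type*} [Fintype m] [Fintype ι]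
    {x : m → EuclideanSpace ℝ ι} (hx : ∀ a, ‖x a‖ ≤ 1) {b : ℕ → ℝ} (hb_nonneg : ∀ k, 0 ≤ b k)
    (hb_sum : Summable b) {H : Matrix m m ℝ} (hH : ∀ a c, H a c = ∑' k, b k * ⟪x a, x c⟫ ^ k)
    (p : ℕ) (z : m → ℝ) :
    b p * (z ⬝ᵥ ((monomialFeatures x p * (monomialFeatures x p)ᵀ) *ᵥ z)) ≤ z ⬝ᵥ (H *ᵥ z) := by
  let G k := b k • (monomialFeatures x k * (monomialFeatures x k)ᵀ)
  have hG : ∀ k a c, G k a c = b k * ⟪x a, x c⟫ ^ k := fun k a c => by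
    simp only [G, Matrix.smul_apply, monomialFeatures_mul_transpose_apply, smul_eq_mul]
  have hsummable : ∀ a c, Summable fun k => G k a c := fun a c => by
    refine hb_sum.of_norm_bounded fun k => ?_
    have hinner : |⟪x a, x c⟫| ≤ 1 :=
      (abs_real_inner_le_norm _ _).trans (mul_le_one₀ (hx a) (norm_nonneg _) (hx c))
    rw [hG, Real.norm_eq_abs, abs_mul, abs_pow, abs_of_nonneg (hb_nonneg k)]
    exact mul_le_of_le_one_right (hb_nonneg k) (pow_le_one₀ (abs_nonneg _) hinner)
  have hnonneg : ∀ k, 0 ≤ z ⬝ᵥ (G k *ᵥ z) := fun k => by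
    rw [smul_mulVec, dotProduct_smul, dotProduct_mul_transpose_mulVec, smul_eq_mul]
    exact mul_nonneg (hb_nonneg k) (Fintype.sum_nonneg fun i => mul_self_nonneg _)
  have hH_tsum : ∀ a c, H a c = ∑' k, G k a c := fun a c => by simp only [hH, hG]
  simpa only [G, smul_mulVec, dotProduct_smul, smul_eq_mul] using
    dotProduct_mulVec_le_of_eq_tsum hH_tsum hsummable z hnonneg p

theorem Real.sqrt_le_mul_of_le_inv_mul_sq {q c r s : ℝ} (hr : 0 < r) (hs : 0 ≤ s)
    (hc : r⁻¹ ^ 2 ≤ c) (hq : q ≤ c⁻¹ * s ^ 2) : √q ≤ r * s := by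
  have hcr : c⁻¹ ≤ r ^ 2 := by
    simpa only [inv_pow, inv_inv] using inv_anti₀ (by positivity) hc
  rw [Real.sqrt_le_left (by positivity), mul_pow]
  exact hq.trans (by gcongr)

theorem stmt3 (n d : ℕ) (x : Fin n → EuclideanSpace ℝ (Fin d))
    (hx : ∀ a, ‖x a‖ = 1)
    (b : ℕ → ℝ) (hb_nonneg : ∀ k, 0 ≤ b k) (hb_sum : Summable b)
    (H : Matrix (Fin n) (Fin n) ℝ)
    (hH : ∀ a c, H a c = ∑' k : ℕ, b k * ⟪x a, x c⟫ ^ k)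
    (hHpd : H.PosDef)
    (p : ℕ) (hp : 1 ≤ p) (hbp : 0 < b p)
    (β : Fin p → EuclideanSpace ℝ (Fin d))
    (y : Fin n → ℝ) (hy : ∀ a, y a = ∏ i, ⟪β i, x a⟫) :
    y ⬝ᵥ (H⁻¹ *ᵥ y) ≤ (b p)⁻¹ * ∏ i, ‖β i‖ ^ 2 ∧
    ((p : ℝ)⁻¹ ^ 2 ≤ b p →
      Real.sqrt (y ⬝ᵥ (H⁻¹ *ᵥ y)) ≤ (p : ℝ) * ∏ i, ‖β i‖) := by
  have hy_features : y = monomialFeatures x p *ᵥ tensorCoords β :=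
    funext fun a => by rw [hy, monomialFeatures_mulVec_tensorCoords]
  have hbound : y ⬝ᵥ (H⁻¹ *ᵥ y) ≤ (b p)⁻¹ * ∏ i, ‖β i‖ ^ 2 := by
    rw [hy_features, ← tensorCoords_dotProduct_self]
    exact dotProduct_inv_mulVec_le ((isUnit_iff_isUnit_det H).mp hHpd.isUnit) _ hbp
      (mul_dotProduct_monomialFeatures_le (fun a => (hx a).le) hb_nonneg hb_sum hH p) _
  refine ⟨hbound, fun hbp_ge => Real.sqrt_le_mul_of_le_inv_mul_sq (by exact_mod_cast hp)
    (by positivity) hbp_ge ?_⟩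
  rwa [← Finset.prod_pow]
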